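/- arXiv:2412.20304 — 4 statements merged into one kernel-verified Lean document; each statement's English description precedes it below -/
import Mathlib

section
/- Let A, B, C, x₀, y₀, z₀ be complex numbers satisfying Cy₀ + z₀ = −1, x₀ + Az₀ = −1, Bx₀ + y₀ = −1, and let D = ABC + 1. Then for every complex number k, the determinant of the matrix with rows (k, −Cx₀, −x₀), (−y₀, k, −Ay₀), (−Bz₀, −z₀, k) equals (k + 1)(k² − k − D·x₀·y₀·z₀). -/
theorem resonance_determinant (A B C x₀ y₀ z₀ : ℂ)
    (h1 : C * y₀ + z₀ = -1) (h2 : x₀ + A * z₀ = -1) (h3 : B * x₀ + y₀ = -1) :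
    ∀ k : ℂ,
      Matrix.det !![k, -C * x₀, -x₀; -y₀, k, -A * y₀; -B * z₀, -z₀, k] =
        (k + 1) * (k ^ 2 - k - (A * B * C + 1) * (x₀ * y₀ * z₀)) := by
  intro k
  simp [Matrix.det_fin_three]
  have hz : z₀ = -1 - C * y₀ := by linear_combination h1
  have hy : y₀ = -1 - B * x₀ := by linear_combination h3
  subst hz hy
  linear_combination (-(B ^ 2 * C * k * x₀ ^ 2) + B * k * (1 - C) * x₀ + k) * h2
end

section
/- Let A, B, C be complex numbers with ABC + 1 = 0. If there exist complex numbers x₀, y₀, z₀ satisfying Cy₀ + z₀ = −1, x₀ + Az₀ = −1, Bx₀ + y₀ = −1, then BA − B + 1 = 0, CB − C + 1 = 0, and AC − A + 1 = 0. -/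
theorem resonance_conditions_when_D_zero (A B C : ℂ) (hD : A * B * C + 1 = 0)
    (h : ∃ x₀ y₀ z₀ : ℂ, C * y₀ + z₀ = -1 ∧ x₀ + A * z₀ = -1 ∧ B * x₀ + y₀ = -1) :
    B * A - B + 1 = 0 ∧ C * B - C + 1 = 0 ∧ A * C - A + 1 = 0 := by
  obtain ⟨x₀, y₀, z₀, h1, h2, h3⟩ := h
  have hB : B ≠ 0 := by
    intro hb
    rw [hb] at hD
    simp at hD
  have hAB : B * A - B + 1 = 0 := by
    linear_combination h3 - B * h2 + A * B * h1 - y₀ * hD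
  have hBC : C * B - C + 1 = 0 := by
    linear_combination hD - C * hAB
  have key : B * (A * C - A + 1) = 0 := by linear_combination hD - hAB
  exact ⟨hAB, hBC, (mul_eq_zero.mp key).resolve_left hB⟩
end

section
/- Let A, B, C, K ∈ ℂ with ABC + 1 = 0 and AC − A + 1 = 0 (equivalently BA − B + 1 = 0 and CB − C + 1 = 0), and let λ ∈ ℂ. Then x(t) = K·exp(λt), y(t) = −B·K·exp(λt), z(t) = B·C·K·exp(λt) satisfy x' = x(Cy + z + λ), y' = y(Az + x + λ), z' = z(Bx + y + λ). -/
lemma exp_deriv_aux (c lam t : ℂ) :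
    HasDerivAt (fun t => c * Complex.exp (lam * t)) (c * Complex.exp (lam * t) * lam) t := by
  have h := ((Complex.hasDerivAt_exp (lam * t)).comp t ((hasDerivAt_id t).const_mul lam)).const_mul c
  simpa [mul_comm, mul_assoc, mul_left_comm] using h

theorem exponential_solution_D_zero (A B C K lam : ℂ)
    (hD : A * B * C + 1 = 0) (hres : A * C - A + 1 = 0) :
    let x : ℂ → ℂ := fun t => K * Complex.exp (lam * t)
    let y : ℂ → ℂ := fun t => -B * K * Complex.exp (lam * t)
    let z : ℂ → ℂ := fun t => B * C * K * Complex.exp (lam * t)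
    (∀ t, HasDerivAt x (x t * (C * y t + z t + lam)) t) ∧
    (∀ t, HasDerivAt y (y t * (A * z t + x t + lam)) t) ∧
    (∀ t, HasDerivAt z (z t * (B * x t + y t + lam)) t) := by
  intro x y z
  refine ⟨fun t => ?_, fun t => ?_, fun t => ?_⟩
  · have h := exp_deriv_aux K lam t
    convert h using 1
    show K * Complex.exp (lam * t) * (C * (-B * K * Complex.exp (lam * t)) + B * C * K * Complex.exp (lam * t) + lam) = _
    ring
  · have h := exp_deriv_aux (-B * K) lam t
    convert h using 1
    show -B * K * Complex.exp (lam * t) * (A * (B * C * K * Complex.exp (lam * t)) + K * Complex.exp (lam * t) + lam) = _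
    have hABC : A * B * C = -1 := by linear_combination hD
    ring_nf
    linear_combination (-(K^2 * Complex.exp (lam*t)^2 * B)) * hD
  · have h := exp_deriv_aux (B * C * K) lam t
    convert h using 1
    show B * C * K * Complex.exp (lam * t) * (B * (K * Complex.exp (lam * t)) + -B * K * Complex.exp (lam * t) + lam) = _
    ring
end

section
/- Let μ ∈ ℂ, C ∈ ℂ with C ≠ 0, and let z : U → ℂ be differentiable and nowhere zero with 2z' = (z + μ)². Set x = −(μ + z)²/(2z) and y = −(μ + z)²/(2Cz). Then x' = x(Cy + z + μ), y' = y(z + x + μ), and z' = z(Bx + y) where B = −1/C − 1, i.e., (x, y, z) solves the 3D Lotka–Volterra system with A = 1, B = −1/C − 1, λ = μ, ν = 0. -/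
/-!
With `s = μ + z`, the ansatz is `x = -s² / (2z)` and `y = x / C`, so `C y = x` and `B x + y = -x`.
The `z`-equation is then `z' = -z x = s² / 2`, which is the hypothesis, and the `y`-equation is the
`x`-equation divided by `C`. For the `x`-equation, the Riccati equation `2 z' = s²` gives
`x' = -s³ (z - μ) / (4 z²) = x (x + s)`.
-/

section

variable {𝕜 : Type*} [NontriviallyNormedField 𝕜] [CharZero 𝕜] {μ : 𝕜} {z : 𝕜 → 𝕜} {t : 𝕜}

lemma hasDerivAt_neg_sq_div_two_mul_of_riccati (hz : HasDerivAt z ((z t + μ) ^ 2 / 2) t)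
    (ht : z t ≠ 0) :
    HasDerivAt (fun t => -(μ + z t) ^ 2 / (2 * z t))
      (-(μ + z t) ^ 2 / (2 * z t) * (-(μ + z t) ^ 2 / (2 * z t) + z t + μ)) t := by
  have hnum :
      HasDerivAt (fun t => -(μ + z t) ^ 2) (-(2 * (μ + z t) * ((z t + μ) ^ 2 / 2))) t := by
    simpa using ((hz.const_add μ).fun_pow 2).fun_neg
  refine (hnum.fun_div (hz.const_mul 2) (mul_ne_zero two_ne_zero ht)).congr_deriv ?_
  field_simp
  ring

end

theorem solution_family_A1_general (μ C : ℂ) (hC : C ≠ 0) (U : Set ℂ)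
    (z : ℂ → ℂ)
    (hz : ∀ t ∈ U, HasDerivAt z ((z t + μ) ^ 2 / 2) t)
    (hne : ∀ t ∈ U, z t ≠ 0) :
    let x : ℂ → ℂ := fun t => -(μ + z t) ^ 2 / (2 * z t)
    let y : ℂ → ℂ := fun t => -(μ + z t) ^ 2 / (2 * C * z t)
    let B : ℂ := -1 / C - 1
    (∀ t ∈ U, HasDerivAt x (x t * (C * y t + z t + μ)) t) ∧
    (∀ t ∈ U, HasDerivAt y (y t * (z t + x t + μ)) t) ∧
    (∀ t ∈ U, HasDerivAt z (z t * (B * x t + y t)) t) := by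
  intro x y B
  have hy : y = fun t => x t / C := by
    funext t
    simp only [x, y, div_div, mul_right_comm]
  have hCy (t : ℂ) : C * y t = x t := by
    rw [hy]
    field_simp
  have hBxy (t : ℂ) : B * x t + y t = -x t := by
    simp only [hy, B]
    field_simp
    ring
  have hx (t : ℂ) (ht : t ∈ U) : HasDerivAt x (x t * (x t + z t + μ)) t :=
    hasDerivAt_neg_sq_div_two_mul_of_riccati (hz t ht) (hne t ht)
  refine ⟨fun t ht => ?_, fun t ht => ?_, fun t ht => ?_⟩
  · rw [hCy]
    exact hx t ht
  · simp only [hy]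
    exact ((hx t ht).div_const C).congr_deriv (by ring)
  · rw [hBxy]
    refine (hz t ht).congr_deriv ?_
    simp only [x]
    field_simp [hne t ht]
    ring

theorem solution_family_A1 (μ C : ℂ) (hC : C ≠ 0) (U : Set ℂ) (hU : IsOpen U)
    (z : ℂ → ℂ)
    (hz : ∀ t ∈ U, HasDerivAt z ((z t + μ) ^ 2 / 2) t)
    (hne : ∀ t ∈ U, z t ≠ 0) :
    let x : ℂ → ℂ := fun t => -(μ + z t) ^ 2 / (2 * z t)
    let y : ℂ → ℂ := fun t => -(μ + z t) ^ 2 / (2 * C * z t)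
    let B : ℂ := -1 / C - 1
    (∀ t ∈ U, HasDerivAt x (x t * (C * y t + z t + μ)) t) ∧
    (∀ t ∈ U, HasDerivAt y (y t * (z t + x t + μ)) t) ∧
    (∀ t ∈ U, HasDerivAt z (z t * (B * x t + y t)) t) :=
  solution_family_A1_general μ C hC U z hz hne
end
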